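/- Let θ ∈ (0, π/2], β = 2cos θ / sqrt(1 + sin²θ), and consider the Hermitian operator M = β Z⊗I + √2·sqrt(1+β²/4) Z⊗Z + √2·sqrt(1−β²/4) X⊗X on ℂ²⊗ℂ². Then M = 2√2·sqrt(1+β²/4) (ψ_θ − φ_θ), where ψ_θ, φ_θ are the rank-one projectors onto |ψ_θ⟩ = cos(θ/2)|00⟩ + sin(θ/2)|11⟩ and |φ_θ⟩ = sin(θ/2)|01⟩ − cos(θ/2)|10⟩. In particular, the only nonzero eigenvalues of M are ±2√2·sqrt(1+β²/4). -/

import Mathlib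

open Matrix Kronecker

noncomputable def PauliX : Matrix (Fin 2) (Fin 2) ℂ := !![0, 1; 1, 0]
noncomputable def PauliZ : Matrix (Fin 2) (Fin 2) ℂ := !![1, 0; 0, -1]

noncomputable def ketPsi (θ : ℝ) : Fin 2 × Fin 2 → ℂ := fun p =>
  if p = (0, 0) then (Real.cos (θ / 2) : ℂ)
  else if p = (1, 1) then (Real.sin (θ / 2) : ℂ) else 0

noncomputable def ketPhi (θ : ℝ) : Fin 2 × Fin 2 → ℂ := fun p =>
  if p = (0, 1) then (Real.sin (θ / 2) : ℂ)
  else if p = (1, 0) then (-Real.cos (θ / 2) : ℂ) else 0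

noncomputable def psiProj (θ : ℝ) : Matrix (Fin 2 × Fin 2) (Fin 2 × Fin 2) ℂ :=
  vecMulVec (ketPsi θ) (star (ketPsi θ))

noncomputable def phiProj (θ : ℝ) : Matrix (Fin 2 × Fin 2) (Fin 2 × Fin 2) ℂ :=
  vecMulVec (ketPhi θ) (star (ketPhi θ))

/-!
With `s = sin θ ≥ 0`, the relation between `β` and `θ` gives `β = a cos θ`,
`√2 √(1 + β²/4) = a` and `√2 √(1 - β²/4) = a s` for `a = 2 / √(1 + s²)`. So the operator is
`a (cos θ Z⊗I + Z⊗Z + sin θ X⊗X)`, and the half-angle formulas identify the bracket entrywise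
with `2 (ψ_θ - φ_θ)`.
-/

lemma pauli_combination_eq_two_smul_psiProj_sub_phiProj (θ : ℝ) :
    (Real.cos θ : ℂ) • (PauliZ ⊗ₖ (1 : Matrix (Fin 2) (Fin 2) ℂ)) + PauliZ ⊗ₖ PauliZ
        + (Real.sin θ : ℂ) • (PauliX ⊗ₖ PauliX) = (2 : ℂ) • (psiProj θ - phiProj θ) := by
  have hc : Real.cos θ = Real.cos (θ / 2) ^ 2 - Real.sin (θ / 2) ^ 2 := by
    rw [← Real.cos_two_mul', mul_div_cancel₀ θ two_ne_zero]
  have hs : Real.sin θ = 2 * Real.sin (θ / 2) * Real.cos (θ / 2) := by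
    rw [← Real.sin_two_mul, mul_div_cancel₀ θ two_ne_zero]
  have hpyth : (Real.sin (θ / 2) : ℂ) ^ 2 + (Real.cos (θ / 2) : ℂ) ^ 2 = 1 := by
    exact_mod_cast Real.sin_sq_add_cos_sq (θ / 2)
  ext ⟨i, j⟩ ⟨k, l⟩
  fin_cases i <;> fin_cases j <;> fin_cases k <;> fin_cases l <;>
    simp [PauliX, PauliZ, psiProj, phiProj, vecMulVec, ketPsi, ketPhi, one_apply, hc, hs,
      -Complex.ofReal_cos, -Complex.ofReal_sin] <;>
    grind

section

variable {c s β : ℝ} (hcs : c ^ 2 + s ^ 2 = 1) (hβ : β = 2 * c / √(1 + s ^ 2))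
include hcs hβ

lemma sqrt_two_mul_sqrt_one_add_sq_div_four : √2 * √(1 + β ^ 2 / 4) = 2 / √(1 + s ^ 2) := by
  have hpos : (0 : ℝ) < 1 + s ^ 2 := by positivity
  have h : 2 * (1 + β ^ 2 / 4) = 2 ^ 2 / (1 + s ^ 2) := by
    rw [hβ, div_pow, Real.sq_sqrt hpos.le]
    field_simp
    linear_combination 4 * hcs
  rw [← Real.sqrt_mul zero_le_two, h, Real.sqrt_div (sq_nonneg 2), Real.sqrt_sq zero_le_two]

lemma sqrt_two_mul_sqrt_one_sub_sq_div_four (hs : 0 ≤ s) :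
    √2 * √(1 - β ^ 2 / 4) = 2 / √(1 + s ^ 2) * s := by
  have hpos : (0 : ℝ) < 1 + s ^ 2 := by positivity
  have h : 2 * (1 - β ^ 2 / 4) = (2 * s) ^ 2 / (1 + s ^ 2) := by
    rw [hβ, div_pow, Real.sq_sqrt hpos.le]
    field_simp
    linear_combination -4 * hcs
  rw [← Real.sqrt_mul zero_le_two, h, Real.sqrt_div (sq_nonneg _), Real.sqrt_sq (by positivity)]
  ring

end

/-- Spectral form of the Bell operator:
`β Z⊗I + √2√(1+β²/4) Z⊗Z + √2√(1−β²/4) X⊗X = 2√2√(1+β²/4) (ψ_θ − φ_θ)`. -/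
theorem bellOp_spectral (θ β : ℝ) (h1 : 0 < θ) (h2 : θ ≤ Real.pi / 2)
    (hβ : β = 2 * Real.cos θ / Real.sqrt (1 + Real.sin θ ^ 2)) :
    (β : ℂ) • (PauliZ ⊗ₖ (1 : Matrix (Fin 2) (Fin 2) ℂ))
        + ((Real.sqrt 2 * Real.sqrt (1 + β ^ 2 / 4) : ℝ) : ℂ) • (PauliZ ⊗ₖ PauliZ)
        + ((Real.sqrt 2 * Real.sqrt (1 - β ^ 2 / 4) : ℝ) : ℂ) • (PauliX ⊗ₖ PauliX)
      = ((2 * Real.sqrt 2 * Real.sqrt (1 + β ^ 2 / 4) : ℝ) : ℂ) •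
          (psiProj θ - phiProj θ) := by
  have hsin : 0 ≤ Real.sin θ :=
    Real.sin_nonneg_of_nonneg_of_le_pi h1.le (h2.trans (by linarith [Real.pi_pos]))
  have hcs := Real.cos_sq_add_sin_sq θ
  rw [mul_assoc, sqrt_two_mul_sqrt_one_add_sq_div_four hcs hβ,
    sqrt_two_mul_sqrt_one_sub_sq_div_four hcs hβ hsin, hβ]
  linear_combination (norm := module)
    ((2 / √(1 + Real.sin θ ^ 2) : ℝ) : ℂ) • pauli_combination_eq_two_smul_psiProj_sub_phiProj θ
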